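/- arXiv:2201.07015 — 3 statements merged into one kernel-verified Lean document; each statement's English description precedes it below -/
import Mathlib

section
/- For a point p = (x,y,z) on the ellipsoid x²/A² + y²/B² + z²/C² = 1 with semi-axes A ≥ B ≥ C > 0, the function h(x,y,z) = 1/(A²B²C²(x²/A⁴ + y²/B⁴ + z²/C⁴)²) attains its minimum value C²/(A²B²) on the ellipsoid, attained at (0,0,±C). -/
set_option maxHeartbeats 800000


noncomputable def ellipsoidCurv (A B C x y z : ℝ) : ℝ :=
  1 / (A^2 * B^2 * C^2 * (x^2 / A^4 + y^2 / B^4 + z^2 / C^4)^2)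

theorem curvature_min_on_ellipsoid (A B C : ℝ) (hAB : A ≥ B) (hBC : B ≥ C) (hC : C > 0) :
    IsLeast {v : ℝ | ∃ x y z : ℝ, x^2 / A^2 + y^2 / B^2 + z^2 / C^2 = 1 ∧
        v = ellipsoidCurv A B C x y z} (C^2 / (A^2 * B^2)) ∧
    ellipsoidCurv A B C 0 0 C = C^2 / (A^2 * B^2) ∧
    ellipsoidCurv A B C 0 0 (-C) = C^2 / (A^2 * B^2) := by
  have hB : (0:ℝ) < B := lt_of_lt_of_le hC hBC
  have hA : (0:ℝ) < A := lt_of_lt_of_le hB hAB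
  have hval : ellipsoidCurv A B C 0 0 C = C^2 / (A^2 * B^2) := by
    unfold ellipsoidCurv
    field_simp
    ring
  have hval' : ellipsoidCurv A B C 0 0 (-C) = C^2 / (A^2 * B^2) := by
    unfold ellipsoidCurv
    field_simp
    ring
  refine ⟨⟨⟨0, 0, C, by field_simp; ring, hval.symm⟩, ?_⟩, hval, hval'⟩
  rintro v ⟨x, y, z, hcon, rfl⟩
  unfold ellipsoidCurv
  set S : ℝ := x^2 / A^4 + y^2 / B^4 + z^2 / C^4 with hSdef
  clear_value S
  have hAC : C ≤ A := le_trans hBC hAB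
  -- S ≥ 1/A² hence positive
  have hup : 1 ≤ A^2 * S := by
    have expand : A^2 * S - (x^2 / A^2 + y^2 / B^2 + z^2 / C^2)
        = y^2 * (A^2 - B^2) / B^4 + z^2 * (A^2 - C^2) / C^4 := by
      rw [hSdef]; field_simp; ring
    have h1 : 0 ≤ y^2 * (A^2 - B^2) / B^4 :=
      div_nonneg (mul_nonneg (sq_nonneg y) (by nlinarith)) (by positivity)
    have h2 : 0 ≤ z^2 * (A^2 - C^2) / C^4 :=
      div_nonneg (mul_nonneg (sq_nonneg z) (by nlinarith)) (by positivity)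
    linarith [expand, hcon, h1, h2]
  have hSpos : 0 < S := by nlinarith [sq_nonneg A]
  -- C²·S ≤ 1
  have hlow : C^2 * S ≤ 1 := by
    have expand : (x^2 / A^2 + y^2 / B^2 + z^2 / C^2) - C^2 * S
        = x^2 * (A^2 - C^2) / A^4 + y^2 * (B^2 - C^2) / B^4 := by
      rw [hSdef]; field_simp; ring
    have h1 : 0 ≤ x^2 * (A^2 - C^2) / A^4 :=
      div_nonneg (mul_nonneg (sq_nonneg x) (by nlinarith)) (by positivity)
    have h2 : 0 ≤ y^2 * (B^2 - C^2) / B^4 :=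
      div_nonneg (mul_nonneg (sq_nonneg y) (by nlinarith)) (by positivity)
    linarith [expand, hcon, h1, h2]
  have hden : 0 < A^2 * B^2 * C^2 * S^2 :=
    mul_pos (by positivity) (pow_pos hSpos 2)
  rw [div_le_div_iff₀ (by positivity) hden]
  have h0 : 0 ≤ C^2 * S := mul_nonneg (sq_nonneg C) hSpos.le
  have h2 : (C^2 * S)^2 ≤ 1 := by rw [sq]; exact mul_le_one₀ hlow h0 hlow
  calc C^2 * (A^2 * B^2 * C^2 * S^2) = A^2 * B^2 * (C^2 * S)^2 := by ring
    _ ≤ A^2 * B^2 * 1 := by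
        exact mul_le_mul_of_nonneg_left h2 (by positivity)
    _ = 1 * (A^2 * B^2) := by ring
end

section
/- Let n ≥ 1 and let Aₙ be a real symmetric tridiagonal n×n matrix with diagonal entries r₁,…,rₙ > 0 and off-diagonal entries s₁,…,s_{n-1}. If sᵢ² < (1/4)·rᵢ·r_{i+1}/cos²(π/(n+1)) for all i = 1,…,n-1, then Aₙ is positive definite. -/
open Real Matrix

private lemma aux_key (c a b u v s X Y : ℝ) (hc : 0 < c) (ha : 0 < a) (hb : 0 < b)
    (hu : 0 < u) (hv : 0 < v) (hs : 4*c^2*s^2 ≤ u*v) :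
    0 ≤ b/(2*c*a) * (u*X^2) + a/(2*c*b) * (v*Y^2) + 2*(s*X*Y) := by
  have h1 : 0 ≤ b^2*u*X^2 + a^2*v*Y^2 + 4*c*a*b*s*X*Y := by
    nlinarith [sq_nonneg (b*u*X + 2*c*a*s*Y), mul_nonneg (sub_nonneg.2 hs) (sq_nonneg (a*Y)),
      sq_nonneg Y]
  have h2 : b/(2*c*a) * (u*X^2) + a/(2*c*b) * (v*Y^2) + 2*(s*X*Y)
      = (b^2*u*X^2 + a^2*v*Y^2 + 4*c*a*b*s*X*Y) / (2*c*a*b) := by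
    field_simp; ring
  rw [h2]
  exact div_nonneg h1 (by positivity)

private lemma aux_key' (c a b u v s X Y : ℝ) (hc : 0 < c) (ha : 0 < a) (hb : 0 < b)
    (hu : 0 < u) (hv : 0 < v) (hs : 4*c^2*s^2 < u*v) (hY : Y ≠ 0) :
    0 < b/(2*c*a) * (u*X^2) + a/(2*c*b) * (v*Y^2) + 2*(s*X*Y) := by
  have hY2 : 0 < Y^2 := lt_of_le_of_ne (sq_nonneg Y) (Ne.symm (pow_ne_zero 2 hY))
  have h1 : 0 < b^2*u*X^2 + a^2*v*Y^2 + 4*c*a*b*s*X*Y := by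
    nlinarith [sq_nonneg (b*u*X + 2*c*a*s*Y), mul_pos (sub_pos.2 hs) (mul_pos (mul_pos ha ha) hY2)]
  have h2 : b/(2*c*a) * (u*X^2) + a/(2*c*b) * (v*Y^2) + 2*(s*X*Y)
      = (b^2*u*X^2 + a^2*v*Y^2 + 4*c*a*b*s*X*Y) / (2*c*a*b) := by
    field_simp; ring
  rw [h2]
  exact div_pos h1 (by positivity)

theorem tridiagonal_posDef (n : ℕ) (hn : 1 ≤ n) (r s : ℕ → ℝ)
    (hr : ∀ i, i < n → 0 < r i)
    (hs : ∀ i, i + 1 < n →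
      (s i)^2 < (1/4) * r i * r (i + 1) / (Real.cos (Real.pi / (n + 1)))^2) :
    Matrix.PosDef (fun i j : Fin n =>
      if (i : ℕ) = (j : ℕ) then r i
      else if (i : ℕ) + 1 = (j : ℕ) then s i
      else if (j : ℕ) + 1 = (i : ℕ) then s j
      else 0) := by
  refine Matrix.posDef_iff_dotProduct_mulVec.mpr ?_
  constructor
  · -- Hermitian
    refine Matrix.IsHermitian.ext fun i j => ?_
    simp only [star_trivial]
    split_ifs with h1 h2 h3 h4 h5 h6 h7 h8 h9 <;> first | rfl | omega | (exact congrArg r (by omega)) | (exact congrArg s (by omega)) | (simp; omega)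
  · intro x hx
    set c : ℝ := Real.cos (Real.pi / (n + 1)) with hc_def
    set x' : ℕ → ℝ := fun i => if h : i < n then x ⟨i, h⟩ else 0 with hx'_def
    have hx'eq : ∀ i : Fin n, x i = x' i.val := by
      intro i; simp [hx'_def, i.isLt]
    -- reduce the quadratic form
    have hQ : dotProduct (star x) (Matrix.mulVec (fun i j : Fin n =>
        if (i : ℕ) = (j : ℕ) then r i
        else if (i : ℕ) + 1 = (j : ℕ) then s i
        else if (j : ℕ) + 1 = (i : ℕ) then s j
        else 0) x)
        = (∑ i ∈ Finset.range n, r i * x' i ^ 2)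
          + 2 * ∑ i ∈ Finset.range (n-1), s i * (x' i * x' (i+1)) := by
      have hP1 : ∑ i ∈ Finset.range n, ∑ j ∈ Finset.range n,
          x' i * (if i = j then r i else 0) * x' j
          = ∑ i ∈ Finset.range n, r i * x' i ^ 2 := by
        refine Finset.sum_congr rfl fun i hi => ?_
        rw [Finset.sum_eq_single i]
        · rw [if_pos rfl]; ring
        · intro j _ hne
          rw [if_neg (fun hh => hne hh.symm)]; ring
        · intro h; exact absurd hi h
      have hP2 : ∑ i ∈ Finset.range n, ∑ j ∈ Finset.range n,
          x' i * (if i + 1 = j then s i else 0) * x' j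
          = ∑ i ∈ Finset.range (n-1), s i * (x' i * x' (i+1)) := by
        have inner : ∀ i ∈ Finset.range n, (∑ j ∈ Finset.range n,
            x' i * (if i + 1 = j then s i else 0) * x' j)
            = if i + 1 < n then s i * (x' i * x' (i+1)) else 0 := by
          intro i _
          by_cases h : i + 1 < n
          · rw [Finset.sum_eq_single (i+1)]
            · rw [if_pos rfl, if_pos h]; ring
            · intro j _ hne
              rw [if_neg (fun hh => hne hh.symm)]; ring
            · intro hmem; exact absurd (Finset.mem_range.2 h) hmem
          · rw [if_neg h]
            apply Finset.sum_eq_zero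
            intro j hj
            have hj' := Finset.mem_range.1 hj
            rw [if_neg (by omega)]; ring
        rw [Finset.sum_congr rfl inner]
        rw [← Finset.sum_subset (Finset.range_subset_range.2 (Nat.sub_le n 1))]
        · refine Finset.sum_congr rfl fun i hi => ?_
          have := Finset.mem_range.1 hi
          rw [if_pos (by omega)]
        · intro i hi hni
          have h1 := Finset.mem_range.1 hi
          have h2 : ¬ i < n - 1 := fun hh => hni (Finset.mem_range.2 hh)
          rw [if_neg (by omega)]
      have hP3 : ∑ i ∈ Finset.range n, ∑ j ∈ Finset.range n,
          x' i * (if j + 1 = i then s j else 0) * x' j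
          = ∑ i ∈ Finset.range (n-1), s i * (x' i * x' (i+1)) := by
        rw [Finset.sum_comm]
        have inner : ∀ j ∈ Finset.range n, (∑ i ∈ Finset.range n,
            x' i * (if j + 1 = i then s j else 0) * x' j)
            = if j + 1 < n then s j * (x' j * x' (j+1)) else 0 := by
          intro j _
          by_cases h : j + 1 < n
          · rw [Finset.sum_eq_single (j+1)]
            · rw [if_pos rfl, if_pos h]; ring
            · intro i _ hne
              rw [if_neg (fun hh => hne hh.symm)]; ring
            · intro hmem; exact absurd (Finset.mem_range.2 h) hmem
          · rw [if_neg h]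
            apply Finset.sum_eq_zero
            intro i hi
            have hi' := Finset.mem_range.1 hi
            rw [if_neg (by omega)]; ring
        rw [Finset.sum_congr rfl inner]
        rw [← Finset.sum_subset (Finset.range_subset_range.2 (Nat.sub_le n 1))]
        · refine Finset.sum_congr rfl fun i hi => ?_
          have := Finset.mem_range.1 hi
          rw [if_pos (by omega)]
        · intro i hi hni
          have h1 := Finset.mem_range.1 hi
          have h2 : ¬ i < n - 1 := fun hh => hni (Finset.mem_range.2 hh)
          rw [if_neg (by omega)]
      have stepA : dotProduct (star x) (Matrix.mulVec (fun i j : Fin n =>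
          if (i : ℕ) = (j : ℕ) then r i
          else if (i : ℕ) + 1 = (j : ℕ) then s i
          else if (j : ℕ) + 1 = (i : ℕ) then s j
          else 0) x)
          = ∑ i ∈ Finset.range n, ∑ j ∈ Finset.range n,
              x' i * (if i = j then r i else if i + 1 = j then s i
                else if j + 1 = i then s j else 0) * x' j := by
        simp only [dotProduct, Matrix.mulVec, Pi.star_apply, star_trivial]
        rw [← Fin.sum_univ_eq_sum_range (fun i => ∑ j ∈ Finset.range n,
          x' i * (if i = j then r i else if i + 1 = j then s i
            else if j + 1 = i then s j else 0) * x' j) n]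
        refine Finset.sum_congr rfl fun i _ => ?_
        rw [← Fin.sum_univ_eq_sum_range (fun j => x' i * (if (i:ℕ) = j then r i
          else if (i:ℕ) + 1 = j then s i else if j + 1 = (i:ℕ) then s j else 0) * x' j) n,
          Finset.mul_sum]
        refine Finset.sum_congr rfl fun j _ => ?_
        rw [hx'eq i, hx'eq j]
        ring
      rw [stepA]
      have stepB : ∑ i ∈ Finset.range n, ∑ j ∈ Finset.range n,
          x' i * (if i = j then r i else if i + 1 = j then s i
            else if j + 1 = i then s j else 0) * x' j
          = ∑ i ∈ Finset.range n, ∑ j ∈ Finset.range n,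
            (x' i * (if i = j then r i else 0) * x' j
             + x' i * (if i + 1 = j then s i else 0) * x' j
             + x' i * (if j + 1 = i then s j else 0) * x' j) := by
        refine Finset.sum_congr rfl fun i _ => Finset.sum_congr rfl fun j _ => ?_
        split_ifs <;> first | ring1 | (exfalso; omega)
      rw [stepB]
      simp only [Finset.sum_add_distrib]
      rw [hP1, hP2, hP3]
      ring
    rw [hQ]
    by_cases hcross : ∀ i, i + 1 < n → x' i * x' (i+1) = 0
    · -- all cross terms vanish
      have h2 : ∑ i ∈ Finset.range (n-1), s i * (x' i * x' (i+1)) = 0 := by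
        apply Finset.sum_eq_zero
        intro i hi
        have hi' : i + 1 < n := by
          have := Finset.mem_range.1 hi; omega
        rw [hcross i hi', mul_zero]
      rw [h2, mul_zero, add_zero]
      obtain ⟨i₀, hi₀⟩ : ∃ i : Fin n, x i ≠ 0 := by
        by_contra h
        push_neg at h
        exact hx (funext h)
      apply Finset.sum_pos'
      · intro i hi
        exact mul_nonneg (le_of_lt (hr i (Finset.mem_range.1 hi))) (sq_nonneg _)
      · refine ⟨i₀.val, Finset.mem_range.2 i₀.isLt, ?_⟩
        have : x' i₀.val ≠ 0 := by rw [← hx'eq]; exact hi₀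
        have h2 : 0 < x' i₀.val ^ 2 := lt_of_le_of_ne (sq_nonneg _) (Ne.symm (pow_ne_zero 2 this))
        exact mul_pos (hr _ i₀.isLt) h2
    · push_neg at hcross
      obtain ⟨i₀, hi₀n, hi₀⟩ := hcross
      have hn2 : 2 ≤ n := by omega
      have hπ : (0:ℝ) < Real.pi := Real.pi_pos
      have hθpos : 0 < Real.pi / (n+1) := by positivity
      have hθlt : Real.pi / (n+1) < Real.pi / 2 := by
        apply div_lt_div_of_pos_left hπ (by norm_num)
        have : (2:ℝ) < (n:ℝ) + 1 := by
          have : (2:ℝ) ≤ (n:ℝ) := by exact_mod_cast hn2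
          linarith
        exact this
      have hc : 0 < c := Real.cos_pos_of_mem_Ioo ⟨by linarith, hθlt⟩
      set θ := Real.pi / (n+1) with hθ_def
      set v : ℕ → ℝ := fun k => Real.sin (k * θ) with hv_def
      have hv0 : v 0 = 0 := by simp [hv_def]
      have hvn : v (n+1) = 0 := by
        have : ((n:ℝ)+1) * θ = Real.pi := by
          rw [hθ_def]; field_simp
        simp only [hv_def]
        push_cast
        rw [this, Real.sin_pi]
      have hvpos : ∀ k, 1 ≤ k → k ≤ n → 0 < v k := by
        intro k h1 h2
        apply Real.sin_pos_of_pos_of_lt_pi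
        · have : (1:ℝ) ≤ k := by exact_mod_cast h1
          nlinarith
        · have hk : (k:ℝ) ≤ n := by exact_mod_cast h2
          have hcalc : (k:ℝ) * θ < ((n:ℝ)+1) * θ := by
            apply mul_lt_mul_of_pos_right _ hθpos
            linarith
          have : ((n:ℝ)+1) * θ = Real.pi := by rw [hθ_def]; field_simp
          linarith [hcalc, this.le]
      have hrec : ∀ k : ℕ, v (k+2) + v k = 2 * c * v (k+1) := by
        intro k
        simp only [hv_def]
        push_cast
        have e1 : ((k:ℝ)+2) * θ = ((k:ℝ)+1)*θ + θ := by ring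
        have e2 : (k:ℝ) * θ = ((k:ℝ)+1)*θ - θ := by ring
        rw [e1, e2, Real.sin_add, Real.sin_sub, hc_def]
        ring
      obtain ⟨m, rfl⟩ : ∃ m, n = m + 2 := ⟨n - 2, by omega⟩
      have hm1 : m + 2 - 1 = m + 1 := by omega
      rw [hm1]
      -- rewrite the diagonal sum
      have hD : ∑ i ∈ Finset.range (m+2), r i * x' i ^ 2
          = ∑ i ∈ Finset.range (m+1),
              (v (i+2)/(2*c*v (i+1)) * (r i * x' i ^2)
               + v (i+1)/(2*c*v (i+2)) * (r (i+1) * x' (i+1) ^2)) := by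
        rw [Finset.sum_add_distrib]
        have hL : ∑ i ∈ Finset.range (m+2), r i * x' i ^ 2
            = ∑ i ∈ Finset.range (m+2), (v (i+2)/(2*c*v (i+1)) * (r i * x' i ^2)
               + v i/(2*c*v (i+1)) * (r i * x' i ^2)) := by
          apply Finset.sum_congr rfl
          intro i hi
          simp only [Finset.mem_range] at hi
          have hvp : 0 < v (i+1) := hvpos (i+1) (by omega) (by omega)
          have : v (i+2)/(2*c*v (i+1)) + v i/(2*c*v (i+1)) = 1 := by
            rw [← add_div, hrec i]
            field_simp
          rw [← add_mul, this, one_mul]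
        rw [hL, Finset.sum_add_distrib]
        congr 1
        · -- first sums: drop last term which is zero
          rw [Finset.sum_range_succ]
          have : v (m+1+2) = 0 := by convert hvn using 2
          rw [this]
          simp
        · -- second: shift index
          rw [Finset.sum_range_succ']
          rw [hv0]
          simp
      rw [hD, Finset.mul_sum, ← Finset.sum_add_distrib]
      apply Finset.sum_pos'
      · intro i hi
        simp only [Finset.mem_range] at hi
        have h4 : 4*c^2*(s i)^2 ≤ r i * r (i+1) := by
          have h := hs i (by omega)
          have hc2 : (0:ℝ) < c^2 := by positivity
          rw [lt_div_iff₀ hc2] at h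
          nlinarith
        have := aux_key c (v (i+1)) (v (i+2)) (r i) (r (i+1)) (s i) (x' i) (x' (i+1)) hc
          (hvpos (i+1) (by omega) (by omega)) (hvpos (i+2) (by omega) (by omega))
          (hr i (by omega)) (hr (i+1) (by omega)) h4
        nlinarith [this]
      · refine ⟨i₀, Finset.mem_range.2 (by omega), ?_⟩
        have h4 : 4*c^2*(s i₀)^2 < r i₀ * r (i₀+1) := by
          have h := hs i₀ hi₀n
          have hc2 : (0:ℝ) < c^2 := by positivity
          rw [lt_div_iff₀ hc2] at h
          nlinarith
        have hY : x' (i₀+1) ≠ 0 := fun h => hi₀ (by rw [h, mul_zero])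
        have := aux_key' c (v (i₀+1)) (v (i₀+2)) (r i₀) (r (i₀+1)) (s i₀) (x' i₀) (x' (i₀+1)) hc
          (hvpos (i₀+1) (by omega) (by omega)) (hvpos (i₀+2) (by omega) (by omega))
          (hr i₀ (by omega)) (hr (i₀+1) (by omega)) h4 hY
        nlinarith [this]
end

section
/- Let 0 > α > β > γ ≥ α + β and l ≥ 4 an integer. Set φ₀ = -[(3α+β)·l(l+1)/2 + γ(2l²+2l-3)], φ₁ = -[(α+β)(l²+l+8) + γ(2l²+2l-19)], and ψ₀² = (β-α)²(l-2)(l-1)(l+2)(l+3). Then 4ψ₀²/(φ₀φ₁) ≤ (β-α)²/γ² < 1. -/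
set_option maxHeartbeats 1000000


theorem Mcoso_ratio_bound (α β γ : ℝ) (hα : 0 > α) (hαβ : α > β) (hβγ : β > γ)
    (hγ : γ ≥ α + β) (l : ℤ) (hl : 4 ≤ l) :
    4 * ((β - α)^2 * ((l : ℝ) - 2) * ((l : ℝ) - 1) * ((l : ℝ) + 2) * ((l : ℝ) + 3)) /
        ((-((3 * α + β) * (l : ℝ) * ((l : ℝ) + 1) / 2 + γ * (2 * (l : ℝ)^2 + 2 * (l : ℝ) - 3))) *
         (-((α + β) * ((l : ℝ)^2 + (l : ℝ) + 8) + γ * (2 * (l : ℝ)^2 + 2 * (l : ℝ) - 19)))) ≤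
      (β - α)^2 / γ^2 ∧
    (β - α)^2 / γ^2 < 1 := by
  have hL : (4:ℝ) ≤ (l:ℝ) := by exact_mod_cast hl
  set L : ℝ := (l:ℝ) with hLdef
  clear_value L
  have hγ0 : γ < 0 := by linarith
  have hγ2 : (0:ℝ) < γ^2 := by nlinarith [mul_pos_of_neg_of_neg hγ0 hγ0]
  have h3 : 3*α + β ≤ γ := by linarith
  have hab : α + β ≤ γ := hγ
  have ht : 20 ≤ L^2 + L := by nlinarith
  set φ₀ : ℝ := -((3 * α + β) * L * (L + 1) / 2 + γ * (2 * L^2 + 2 * L - 3)) with hφ₀def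
  set φ₁ : ℝ := -((α + β) * (L^2 + L + 8) + γ * (2 * L^2 + 2 * L - 19)) with hφ₁def
  clear_value φ₀ φ₁
  have h0 : -γ * (5*(L^2+L) - 6)/2 ≤ φ₀ := by
    have : 0 ≤ (γ - (3*α+β)) * (L^2 + L) := by nlinarith
    rw [hφ₀def]; nlinarith
  have h1 : -γ * (3*(L^2+L) - 11) ≤ φ₁ := by
    have : 0 ≤ (γ - (α+β)) * (L^2 + L + 8) := by nlinarith
    rw [hφ₁def]; nlinarith
  have hApos : (0:ℝ) < -γ * (5*(L^2+L) - 6)/2 := by nlinarith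
  have hBpos : (0:ℝ) < -γ * (3*(L^2+L) - 11) := by nlinarith
  have hφ₀pos : 0 < φ₀ := lt_of_lt_of_le hApos h0
  have hφ₁pos : 0 < φ₁ := lt_of_lt_of_le hBpos h1
  have hDpos : 0 < φ₀ * φ₁ := mul_pos hφ₀pos hφ₁pos
  have hAB : (-γ * (5*(L^2+L) - 6)/2) * (-γ * (3*(L^2+L) - 11)) ≤ φ₀ * φ₁ :=
    mul_le_mul h0 h1 hBpos.le hφ₀pos.le
  have hpoly : 0 ≤ 7*(L^2+L)^2 - 9*(L^2+L) - 30 := by nlinarith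
  have heq : (-γ * (5*(L^2+L) - 6)/2) * (-γ * (3*(L^2+L) - 11))
      - 4 * γ^2 * ((L - 2) * (L - 1) * (L + 2) * (L + 3))
      = γ^2 * (7*(L^2+L)^2 - 9*(L^2+L) - 30) / 2 := by ring
  have hprod : 4 * γ^2 * ((L - 2) * (L - 1) * (L + 2) * (L + 3)) ≤ φ₀ * φ₁ := by
    nlinarith [mul_nonneg hγ2.le hpoly, hAB, heq]
  constructor
  · rw [div_le_div_iff₀ hDpos hγ2]
    nlinarith [mul_le_mul_of_nonneg_left hprod (sq_nonneg (β - α))]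
  · rw [div_lt_one hγ2]
    nlinarith [mul_pos (by linarith : (0:ℝ) < β - α - γ) (by linarith : (0:ℝ) < α - β - γ)]
end
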